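/- Let W ∈ ℝ^{n×n} be symmetric with nonnegative entries and positive row sums, D the diagonal matrix of row sums, S = D^{-1/2} W D^{-1/2}, μ > 0, α = 1/(1+μ), and E ∈ ℝ^{n×n}. Then a matrix F ∈ ℝ^{n×n} minimizes the objective J(F) = vec(F)ᵀ(𝕀 - 𝕊̄)vec(F) + μ‖F - E‖_F², where 𝕊̄ = (S ⊗ I + I ⊗ S)/2, if and only if F satisfies the Lyapunov equation (I - αS)F + F(I - αS) = 2(1-α)E. -/

import Mathlib

open Matrix Kronecker

/-- The symmetrically normalized matrix `S = D^{-1/2} W D^{-1/2}`. -/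
noncomputable def normMat (n : ℕ) (W : Matrix (Fin n) (Fin n) ℝ) :
    Matrix (Fin n) (Fin n) ℝ :=
  (Matrix.diagonal fun i => (Real.sqrt (∑ j, W i j))⁻¹) * W *
    (Matrix.diagonal fun i => (Real.sqrt (∑ j, W i j))⁻¹)

/-- The mean Kronecker product `𝕊̄ = (S ⊗ I + I ⊗ S)/2`. -/
noncomputable def meanKron (n : ℕ) (W : Matrix (Fin n) (Fin n) ℝ) :
    Matrix (Fin n × Fin n) (Fin n × Fin n) ℝ :=
  (2 : ℝ)⁻¹ • (normMat n W ⊗ₖ (1 : Matrix (Fin n) (Fin n) ℝ) +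
    (1 : Matrix (Fin n) (Fin n) ℝ) ⊗ₖ normMat n W)

/-- The vectorization `vec(F)`, with `vec(F)_(i,k) = F k i` (columns stacked). -/
def vecM (n : ℕ) (F : Matrix (Fin n) (Fin n) ℝ) : Fin n × Fin n → ℝ :=
  fun p => F p.2 p.1

/-- The objective `J(F) = vec(F)ᵀ(𝕀 - 𝕊̄)vec(F) + μ‖F - E‖_F²`. -/
noncomputable def objJ (n : ℕ) (W : Matrix (Fin n) (Fin n) ℝ) (μ : ℝ)
    (E : Matrix (Fin n) (Fin n) ℝ) (F : Matrix (Fin n) (Fin n) ℝ) : ℝ :=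
  vecM n F ⬝ᵥ (((1 : Matrix (Fin n × Fin n) (Fin n × Fin n) ℝ) - meanKron n W).mulVec
    (vecM n F)) + μ * ∑ i, ∑ j, (F i j - E i j) ^ 2

lemma normMat_apply {n : ℕ} {W : Matrix (Fin n) (Fin n) ℝ} (i j : Fin n) :
    normMat n W i j = (Real.sqrt (∑ k, W i k))⁻¹ * W i j * (Real.sqrt (∑ k, W j k))⁻¹ := by
  simp [normMat, Matrix.diagonal_mul, Matrix.mul_diagonal]

lemma normMat_symm {n : ℕ} {W : Matrix (Fin n) (Fin n) ℝ} (hsym : Wᵀ = W) (i j : Fin n) :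
    normMat n W j i = normMat n W i j := by
  have h : W j i = W i j := by rw [show W j i = Wᵀ i j from rfl, hsym]
  rw [normMat_apply, normMat_apply, h]; ring

lemma quad_le {n : ℕ} {W : Matrix (Fin n) (Fin n) ℝ} (hsym : Wᵀ = W)
    (hW : ∀ i j, 0 ≤ W i j) (hrow : ∀ i, 0 < ∑ j, W i j) (y : Fin n → ℝ) :
    y ⬝ᵥ (normMat n W).mulVec y ≤ y ⬝ᵥ y := by
  have hWs : ∀ i j : Fin n, W j i = W i j := fun i j => by
    rw [show W j i = Wᵀ i j from rfl, hsym]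
  set f : Fin n → ℝ := fun i => (Real.sqrt (∑ k, W i k))⁻¹ with hf
  set z : Fin n → ℝ := fun i => f i * y i with hz
  have hd1 : ∀ i, (∑ k, W i k) * f i ^ 2 = 1 := by
    intro i
    have h0 : (0:ℝ) ≤ ∑ k, W i k := (hrow i).le
    have : f i ^ 2 = (∑ k, W i k)⁻¹ := by
      rw [hf]; simp only [← Real.sqrt_inv]
      rw [Real.sq_sqrt (inv_nonneg.2 h0)]
    rw [this, mul_inv_cancel₀ (hrow i).ne']
  have expand : y ⬝ᵥ (normMat n W).mulVec y = ∑ i, ∑ j, W i j * (z i * z j) := by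
    simp only [dotProduct, Matrix.mulVec, dotProduct, Finset.mul_sum]
    refine Finset.sum_congr rfl fun i _ => Finset.sum_congr rfl fun j _ => ?_
    rw [normMat_apply]; simp only [hz, hf]; ring
  rw [expand]
  have step : ∑ i, ∑ j, W i j * (z i * z j)
      ≤ ∑ i, ∑ j, (W i j * z i ^ 2 / 2 + W i j * z j ^ 2 / 2) := by
    refine Finset.sum_le_sum fun i _ => Finset.sum_le_sum fun j _ => ?_
    nlinarith [sq_nonneg (z i - z j), hW i j]
  refine step.trans ?_
  have colsum : ∀ j, (∑ i, W i j) = ∑ k, W j k :=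
    fun j => Finset.sum_congr rfl fun i _ => hWs j i
  have t1 : ∀ i : Fin n, ∑ j, W i j * z i ^ 2 / 2 = y i * y i / 2 := by
    intro i
    rw [← Finset.sum_div, ← Finset.sum_mul]
    simp only [hz]
    linear_combination (y i ^ 2 / 2) * hd1 i
  have t2 : ∑ i, ∑ j, W i j * z j ^ 2 / 2 = ∑ j, y j * y j / 2 := by
    rw [Finset.sum_comm]
    refine Finset.sum_congr rfl fun j _ => ?_
    rw [← Finset.sum_div, ← Finset.sum_mul, colsum j]
    simp only [hz]
    linear_combination (y j ^ 2 / 2) * hd1 j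
  have : ∑ i, ∑ j, (W i j * z i ^ 2 / 2 + W i j * z j ^ 2 / 2)
      = (∑ i, ∑ j, W i j * z i ^ 2 / 2) + ∑ i, ∑ j, W i j * z j ^ 2 / 2 := by
    rw [← Finset.sum_add_distrib]
    exact Finset.sum_congr rfl fun i _ => Finset.sum_add_distrib
  rw [this, t2]
  simp only [t1, dotProduct]
  rw [← Finset.sum_add_distrib]
  exact le_of_eq (Finset.sum_congr rfl fun i _ => by ring)

lemma kron1_mulVec {n : ℕ} (S : Matrix (Fin n) (Fin n) ℝ) (v : Fin n × Fin n → ℝ)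
    (p : Fin n × Fin n) :
    (S ⊗ₖ (1 : Matrix (Fin n) (Fin n) ℝ)).mulVec v p = ∑ k, S p.1 k * v (k, p.2) := by
  obtain ⟨i, j⟩ := p
  simp [Matrix.mulVec, dotProduct, Fintype.sum_prod_type, Matrix.one_apply,
    mul_ite, ite_mul, Finset.sum_ite_eq', Finset.sum_ite_eq]

lemma kron2_mulVec {n : ℕ} (S : Matrix (Fin n) (Fin n) ℝ) (v : Fin n × Fin n → ℝ)
    (p : Fin n × Fin n) :
    ((1 : Matrix (Fin n) (Fin n) ℝ) ⊗ₖ S).mulVec v p = ∑ l, S p.2 l * v (p.1, l) := by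
  obtain ⟨i, j⟩ := p
  simp [Matrix.mulVec, dotProduct, Fintype.sum_prod_type, Matrix.one_apply,
    mul_ite, ite_mul, Finset.sum_ite_eq', Finset.sum_ite_eq]

lemma quadK1_le {n : ℕ} (S : Matrix (Fin n) (Fin n) ℝ)
    (hq : ∀ y : Fin n → ℝ, y ⬝ᵥ S.mulVec y ≤ y ⬝ᵥ y) (v : Fin n × Fin n → ℝ) :
    v ⬝ᵥ (S ⊗ₖ (1 : Matrix (Fin n) (Fin n) ℝ)).mulVec v ≤ v ⬝ᵥ v := by
  have h1 : v ⬝ᵥ (S ⊗ₖ (1 : Matrix (Fin n) (Fin n) ℝ)).mulVec v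
      = ∑ j, (fun i => v (i,j)) ⬝ᵥ S.mulVec (fun i => v (i,j)) := by
    simp only [dotProduct, kron1_mulVec]
    simp only [Matrix.mulVec, dotProduct, Fintype.sum_prod_type]
    rw [Finset.sum_comm]
  have h2 : v ⬝ᵥ v = ∑ j, (fun i => v (i,j)) ⬝ᵥ (fun i => v (i,j)) := by
    simp only [dotProduct, Fintype.sum_prod_type]
    rw [Finset.sum_comm]
  rw [h1, h2]
  exact Finset.sum_le_sum fun j _ => hq _

lemma quadK2_le {n : ℕ} (S : Matrix (Fin n) (Fin n) ℝ)
    (hq : ∀ y : Fin n → ℝ, y ⬝ᵥ S.mulVec y ≤ y ⬝ᵥ y) (v : Fin n × Fin n → ℝ) :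
    v ⬝ᵥ ((1 : Matrix (Fin n) (Fin n) ℝ) ⊗ₖ S).mulVec v ≤ v ⬝ᵥ v := by
  have h1 : v ⬝ᵥ ((1 : Matrix (Fin n) (Fin n) ℝ) ⊗ₖ S).mulVec v
      = ∑ i, (fun j => v (i,j)) ⬝ᵥ S.mulVec (fun j => v (i,j)) := by
    simp only [dotProduct, kron2_mulVec]
    simp only [Matrix.mulVec, dotProduct, Fintype.sum_prod_type]
  have h2 : v ⬝ᵥ v = ∑ i, (fun j => v (i,j)) ⬝ᵥ (fun j => v (i,j)) := by
    simp only [dotProduct, Fintype.sum_prod_type]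
  rw [h1, h2]
  exact Finset.sum_le_sum fun i _ => hq _

lemma meanKron_quad_le {n : ℕ} {W : Matrix (Fin n) (Fin n) ℝ}
    (hq : ∀ y : Fin n → ℝ, y ⬝ᵥ (normMat n W).mulVec y ≤ y ⬝ᵥ y) (v : Fin n × Fin n → ℝ) :
    v ⬝ᵥ (meanKron n W).mulVec v ≤ v ⬝ᵥ v := by
  have := quadK1_le (normMat n W) hq v
  have := quadK2_le (normMat n W) hq v
  rw [meanKron, Matrix.smul_mulVec, Matrix.add_mulVec, dotProduct_smul,
    dotProduct_add, smul_eq_mul]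
  linarith

lemma meanKron_mulVec_vec {n : ℕ} {W : Matrix (Fin n) (Fin n) ℝ} (hsym : Wᵀ = W)
    (F : Matrix (Fin n) (Fin n) ℝ) :
    (meanKron n W).mulVec (vecM n F) =
      vecM n ((2:ℝ)⁻¹ • (F * normMat n W + normMat n W * F)) := by
  funext p
  rw [meanKron, Matrix.smul_mulVec, Matrix.add_mulVec]
  simp only [Pi.smul_apply, Pi.add_apply, kron1_mulVec, kron2_mulVec, vecM,
    Matrix.smul_apply, Matrix.add_apply, Matrix.mul_apply, smul_eq_mul]
  have h1 : ∑ k, normMat n W p.1 k * F p.2 k = ∑ k, F p.2 k * normMat n W k p.1 :=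
    Finset.sum_congr rfl fun k _ => by rw [normMat_symm hsym]; ring
  rw [h1]

lemma dot_symm {m : Type*} [Fintype m] (M : Matrix m m ℝ) (hM : Mᵀ = M)
    (v w : m → ℝ) : v ⬝ᵥ M.mulVec w = w ⬝ᵥ M.mulVec v := by
  rw [Matrix.dotProduct_mulVec]
  conv_lhs => rw [← hM, Matrix.vecMul_transpose]
  rw [dotProduct_comm]

lemma vecM_inj {n : ℕ} {A B : Matrix (Fin n) (Fin n) ℝ} (h : vecM n A = vecM n B) :
    A = B := by
  ext i j
  exact congrFun h (j, i)

/-- For `W` symmetric with nonnegative entries and positive row sums, `μ > 0` and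
`α = 1/(1+μ)`, a matrix `F` minimizes the objective `J` if and only if it satisfies the
Lyapunov equation `(I - αS)F + F(I - αS) = 2(1-α)E`. -/
theorem minimizer_iff_lyapunov (n : ℕ) (W : Matrix (Fin n) (Fin n) ℝ) (hsym : Wᵀ = W)
    (hW : ∀ i j, 0 ≤ W i j) (hrow : ∀ i, 0 < ∑ j, W i j)
    (μ : ℝ) (hμ : 0 < μ) (α : ℝ) (hα : α = 1 / (1 + μ)) (E : Matrix (Fin n) (Fin n) ℝ) :
    ∀ F : Matrix (Fin n) (Fin n) ℝ,
      (∀ G : Matrix (Fin n) (Fin n) ℝ, objJ n W μ E F ≤ objJ n W μ E G) ↔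
      ((1 : Matrix (Fin n) (Fin n) ℝ) - α • normMat n W) * F +
        F * ((1 : Matrix (Fin n) (Fin n) ℝ) - α • normMat n W) = (2 * (1 - α)) • E := by
  intro F
  have h1μ : (0:ℝ) < 1 + μ := by linarith
  set S := normMat n W with hS
  set K := meanKron n W with hK
  set M : Matrix (Fin n × Fin n) (Fin n × Fin n) ℝ
    := (1 + μ) • (1 : Matrix (Fin n × Fin n) (Fin n × Fin n) ℝ) - K with hM
  set v := vecM n F with hv
  set e := vecM n E with he
  have hq := quad_le hsym hW hrow
  -- symmetry of M
  have hSsym : ∀ a b, normMat n W a b = normMat n W b a :=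
    fun a b => normMat_symm hsym b a
  have hMsym : Mᵀ = M := by
    ext p q
    simp only [Matrix.transpose_apply, hM, Matrix.sub_apply, Matrix.smul_apply, hK, meanKron,
      Matrix.add_apply, Matrix.kroneckerMap_apply, Matrix.one_apply, smul_eq_mul]
    obtain ⟨p1, p2⟩ := p; obtain ⟨q1, q2⟩ := q
    rw [normMat_symm hsym p1 q1, normMat_symm hsym p2 q2]
    by_cases h1 : p1 = q1 <;> by_cases h2 : p2 = q2
    · subst h1; subst h2; rfl
    · subst h1
      have h2' : q2 ≠ p2 := fun h => h2 h.symm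
      simp [h2, h2', Prod.mk.injEq]
    · subst h2
      have h1' : q1 ≠ p1 := fun h => h1 h.symm
      simp [h1, h1', Prod.mk.injEq]
    · have h1' : q1 ≠ p1 := fun h => h1 h.symm
      have h2' : q2 ≠ p2 := fun h => h2 h.symm
      simp [h1, h2, h1', h2', Prod.mk.injEq]
  have hdots : ∀ x y, x ⬝ᵥ M.mulVec y = y ⬝ᵥ M.mulVec x := dot_symm M hMsym
  -- strong convexity
  have hMquad : ∀ d : Fin n × Fin n → ℝ, μ * (d ⬝ᵥ d) ≤ d ⬝ᵥ M.mulVec d := by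
    intro d
    have h := meanKron_quad_le hq d
    rw [hM, Matrix.sub_mulVec, Matrix.smul_mulVec, Matrix.one_mulVec,
      dotProduct_sub, dotProduct_smul, smul_eq_mul]
    rw [← hK] at h
    linarith
  -- objective rewritten
  have hsumsq : ∀ G : Matrix (Fin n) (Fin n) ℝ,
      (∑ i, ∑ j, (G i j - E i j) ^ 2)
        = (vecM n G - vecM n E) ⬝ᵥ (vecM n G - vecM n E) := by
    intro G
    simp only [dotProduct, Fintype.sum_prod_type, Pi.sub_apply, vecM]
    rw [Finset.sum_comm]
    exact Finset.sum_congr rfl fun i _ => Finset.sum_congr rfl fun j _ => by ring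
  have hobj : ∀ G : Matrix (Fin n) (Fin n) ℝ,
      objJ n W μ E G = vecM n G ⬝ᵥ M.mulVec (vecM n G)
        - 2 * μ * (vecM n G ⬝ᵥ e) + μ * (e ⬝ᵥ e) := by
    intro G
    rw [objJ, hsumsq G, ← hK, ← he]
    have hc : e ⬝ᵥ vecM n G = vecM n G ⬝ᵥ e := dotProduct_comm _ _
    simp only [hM, Matrix.sub_mulVec, Matrix.smul_mulVec, Matrix.one_mulVec,
      dotProduct_sub, sub_dotProduct, dotProduct_smul, smul_eq_mul, hc]
    ring
  -- difference formula
  set r : Fin n × Fin n → ℝ := M.mulVec v - μ • e with hr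
  have hdelta : ∀ G : Matrix (Fin n) (Fin n) ℝ,
      objJ n W μ E G - objJ n W μ E F
        = (vecM n G - v) ⬝ᵥ M.mulVec (vecM n G - v) + 2 * ((vecM n G - v) ⬝ᵥ r) := by
    intro G
    rw [hobj G, hobj F, hr]
    set w := vecM n G
    rw [Matrix.mulVec_sub]
    simp only [sub_dotProduct, dotProduct_sub, dotProduct_smul, smul_eq_mul]
    rw [hdots v w]
    rw [dotProduct_comm v e]
    ring
  -- main equivalence with normal equation
  have key : (∀ G : Matrix (Fin n) (Fin n) ℝ, objJ n W μ E F ≤ objJ n W μ E G)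
      ↔ M.mulVec v = μ • e := by
    constructor
    · intro hmin
      have hr0 : r = 0 := by
        by_contra hne
        have hrr : 0 < r ⬝ᵥ r := by
          have h0 : 0 ≤ r ⬝ᵥ r := Finset.sum_nonneg fun p _ => mul_self_nonneg _
          rcases h0.lt_or_eq with h | h
          · exact h
          · exfalso; apply hne
            funext p
            have := (Finset.sum_eq_zero_iff_of_nonneg
              (fun p _ => mul_self_nonneg (r p))).1 h.symm p (Finset.mem_univ p)
            have := mul_self_eq_zero.1 this
            simpa using this
        have hqpos : 0 < r ⬝ᵥ M.mulVec r := lt_of_lt_of_le (by positivity) (hMquad r)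
        set t : ℝ := (r ⬝ᵥ r) / (r ⬝ᵥ M.mulVec r) with ht
        set G : Matrix (Fin n) (Fin n) ℝ := fun i j => F i j - t * r (j, i) with hG
        have hvecG : vecM n G - v = (-t) • r := by
          funext p
          obtain ⟨i, j⟩ := p
          simp only [Pi.sub_apply, Pi.smul_apply, smul_eq_mul, vecM, hG, hv]
          ring
        have hlt : objJ n W μ E G - objJ n W μ E F < 0 := by
          rw [hdelta G, hvecG]
          rw [Matrix.mulVec_smul]
          simp only [smul_dotProduct, dotProduct_smul, smul_eq_mul]
          have htpos : 0 < t := div_pos hrr hqpos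
          have htq : t * (r ⬝ᵥ M.mulVec r) = r ⬝ᵥ r := by
            rw [ht, div_mul_cancel₀ _ hqpos.ne']
          nlinarith [mul_pos htpos hrr]
        have := hmin G
        linarith
      have : M.mulVec v - μ • e = 0 := hr0
      funext p
      have := congrFun this p
      simp only [Pi.sub_apply, Pi.zero_apply, sub_eq_zero] at this
      exact this
    · intro heq
      intro G
      have hr0 : r = 0 := by rw [hr, heq]; simp
      have h := hdelta G
      rw [hr0] at h
      simp only [dotProduct_zero, mul_zero, add_zero] at h
      have h2 := hMquad (vecM n G - v)
      have h3 : 0 ≤ (vecM n G - v) ⬝ᵥ (vecM n G - v) :=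
        Finset.sum_nonneg fun p _ => mul_self_nonneg _
      nlinarith
  rw [key]
  -- normal equation ↔ Lyapunov equation
  have hKF : M.mulVec v = vecM n ((1 + μ) • F - (2:ℝ)⁻¹ • (F * S + S * F)) := by
    rw [hM, Matrix.sub_mulVec, Matrix.smul_mulVec, Matrix.one_mulVec, hv, hK,
      meanKron_mulVec_vec hsym]
    funext p
    simp [vecM]
    rfl
  have hmue : μ • e = vecM n (μ • E) := by funext p; simp [vecM, he]
  rw [hKF, hmue]
  have hne2 : (2 / (1 + μ) : ℝ) ≠ 0 := by positivity
  have hscale : ((1 : Matrix (Fin n) (Fin n) ℝ) - α • S) * F +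
      F * ((1 : Matrix (Fin n) (Fin n) ℝ) - α • S)
      = (2 / (1 + μ)) • ((1 + μ) • F - (2:ℝ)⁻¹ • (F * S + S * F)) := by
    rw [hα, Matrix.sub_mul, Matrix.mul_sub, Matrix.one_mul, Matrix.mul_one,
      Matrix.smul_mul, Matrix.mul_smul]
    match_scalars <;> field_simp <;> ring
  have hscale2 : (2 * (1 - α)) • E = ((2 / (1 + μ)) : ℝ) • (μ • E) := by
    rw [hα, smul_smul]
    congr 1
    field_simp
    ring
  constructor
  · intro h
    rw [hscale, hscale2, vecM_inj h]
  · intro h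
    have hc : ((2 / (1 + μ)) : ℝ) • ((1 + μ) • F - (2:ℝ)⁻¹ • (F * S + S * F))
        = ((2 / (1 + μ)) : ℝ) • (μ • E) := by rw [← hscale, ← hscale2, h]
    have := smul_right_injective (Matrix (Fin n) (Fin n) ℝ) hne2 hc
    rw [this]
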